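/- Let n ≥ 1 and let α, β, γ ∈ P_n be partial transformations of [n] with |im α| = |im β| and α = βγ (left-to-right composition: apply β first, then γ). Then there exists γ′ ∈ P_n such that |im γ′| = |im α| and α = βγ′. -/

import Mathlib

/-- A partial transformation of the chain `[n] = {1, …, n}`: a function defined on a
subset `dom ⊆ {1, …, n}` with values in `{1, …, n}` (junk value `0` outside the domain,
so that equality of partial transformations is equality of domains and of values on
the domain). -/
structure PT (n : ℕ) where
  dom : Finset ℕ
  toFun : ℕ → ℕ
  dom_subset : dom ⊆ Finset.Icc 1 n
  maps_to : ∀ x ∈ dom, toFun x ∈ Finset.Icc 1 n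
  zero_outside : ∀ x ∉ dom, toFun x = 0

namespace PT

/-- Left-to-right composition `αβ`: apply `α` first, then `β`.
`dom (αβ) = {x ∈ dom α : xα ∈ dom β}` and `x(αβ) = (xα)β`. -/
def comp {n : ℕ} (α β : PT n) : PT n where
  dom := α.dom.filter (fun x => α.toFun x ∈ β.dom)
  toFun := fun x => if x ∈ α.dom ∧ α.toFun x ∈ β.dom then β.toFun (α.toFun x) else 0
  dom_subset := fun x hx => α.dom_subset (Finset.mem_filter.mp hx).1
  maps_to := by
    intro x hx
    rw [Finset.mem_filter] at hx
    try simp only []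
    rw [if_pos ⟨hx.1, hx.2⟩]
    exact β.maps_to _ hx.2
  zero_outside := by
    intro x hx
    rw [Finset.mem_filter] at hx
    push_neg at hx
    try simp only []
    rw [if_neg]
    rintro ⟨h1, h2⟩
    exact absurd h2 (hx h1)

/-- `α` is a contraction: `|xα − yα| ≤ |x − y|` for all `x, y ∈ dom α`. -/
def IsContraction {n : ℕ} (α : PT n) : Prop :=
  ∀ x ∈ α.dom, ∀ y ∈ α.dom,
    |(α.toFun x : ℤ) - (α.toFun y : ℤ)| ≤ |(x : ℤ) - (y : ℤ)|

/-- The image `im α = {xα : x ∈ dom α}`. -/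
def im {n : ℕ} (α : PT n) : Finset ℕ := α.dom.image α.toFun

/-- `T` is a transversal of the kernel partition `Ker α`: it is contained in `dom α`
and contains exactly one element of each kernel class. -/
def IsTransversal {n : ℕ} (α : PT n) (T : Finset ℕ) : Prop :=
  T ⊆ α.dom ∧ ∀ a ∈ α.dom, ∃! t, t ∈ T ∧ α.toFun t = α.toFun a

/-- `T` is an admissible transversal of `Ker α`: a transversal such that
`|t − t′| ≤ |a − a′|` whenever `a` is in the kernel class of `t` and `a′` in that
of `t′`. -/
def IsAdmissible {n : ℕ} (α : PT n) (T : Finset ℕ) : Prop :=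
  IsTransversal α T ∧
    ∀ t ∈ T, ∀ t' ∈ T, ∀ a ∈ α.dom, ∀ a' ∈ α.dom,
      α.toFun a = α.toFun t → α.toFun a' = α.toFun t' →
        |(t : ℤ) - (t' : ℤ)| ≤ |(a : ℤ) - (a' : ℤ)|

end PT

lemma PT.ext' {n : ℕ} {α β : PT n} (hd : α.dom = β.dom)
    (hf : α.toFun = β.toFun) : α = β := by
  cases α; cases β; simp_all

/-- If `|im α| = |im β|` and `α = βγ`, then there exists `γ′` with
`|im γ′| = |im α|` and `α = βγ′`. -/
theorem exists_gamma_same_rank (n : ℕ) (hn : 1 ≤ n) (α β γ : PT n)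
    (hcard : α.im.card = β.im.card) (h : α = β.comp γ) :
    ∃ γ' : PT n, γ'.im.card = α.im.card ∧ α = β.comp γ' := by
  classical
  refine ⟨⟨γ.dom ∩ β.im, fun x => if x ∈ γ.dom ∩ β.im then γ.toFun x else 0,
    fun x hx => γ.dom_subset (Finset.mem_inter.mp hx).1,
    fun x hx => by simp only [hx, if_true]; exact γ.maps_to x (Finset.mem_inter.mp hx).1,
    fun x hx => by simp only [hx, if_false]⟩, ?_, ?_⟩
  · congr 1
    rw [h]
    ext y
    simp only [PT.im, PT.comp, Finset.mem_image, Finset.mem_filter, Finset.mem_inter]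
    constructor
    · rintro ⟨z, ⟨⟨hz1, hz2⟩, hif⟩⟩
      obtain ⟨x, hx, rfl⟩ := hz2
      rw [if_pos (show β.toFun x ∈ γ.dom ∧ ∃ a ∈ β.dom, β.toFun a = β.toFun x from
        ⟨hz1, x, hx, rfl⟩)] at hif
      exact ⟨x, ⟨hx, hz1⟩, by rw [if_pos ⟨hx, hz1⟩]; exact hif⟩
    · rintro ⟨x, hx, hif⟩
      rw [if_pos hx] at hif
      refine ⟨β.toFun x, ⟨⟨hx.2, x, hx.1, rfl⟩, ?_⟩⟩
      rw [if_pos (show β.toFun x ∈ γ.dom ∧ ∃ a ∈ β.dom, β.toFun a = β.toFun x from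
        ⟨hx.2, x, hx.1, rfl⟩)]
      exact hif
  · rw [h]
    apply PT.ext'
    · ext x
      simp only [PT.comp, Finset.mem_filter, Finset.mem_inter]
      constructor
      · rintro ⟨hx, hg⟩
        exact ⟨hx, hg, Finset.mem_image.mpr ⟨x, hx, rfl⟩⟩
      · rintro ⟨hx, hg, _⟩
        exact ⟨hx, hg⟩
    · funext x
      show (if x ∈ β.dom ∧ β.toFun x ∈ γ.dom then γ.toFun (β.toFun x) else 0) = _
      by_cases hx : x ∈ β.dom ∧ β.toFun x ∈ γ.dom
      · have him : β.toFun x ∈ β.im := Finset.mem_image.mpr ⟨x, hx.1, rfl⟩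
        have hmem : β.toFun x ∈ γ.dom ∩ β.im := Finset.mem_inter.mpr ⟨hx.2, him⟩
        rw [if_pos hx]
        show _ = (if x ∈ β.dom ∧ β.toFun x ∈ γ.dom ∩ β.im then
          (if β.toFun x ∈ γ.dom ∩ β.im then γ.toFun (β.toFun x) else 0) else 0)
        rw [if_pos ⟨hx.1, hmem⟩, if_pos hmem]
      · rw [if_neg hx]
        show (0:ℕ) = (if x ∈ β.dom ∧ β.toFun x ∈ γ.dom ∩ β.im then
          (if β.toFun x ∈ γ.dom ∩ β.im then γ.toFun (β.toFun x) else 0) else 0)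
        rw [if_neg]
        rintro ⟨h1, h2⟩
        exact hx ⟨h1, (Finset.mem_inter.mp h2).1⟩
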